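/- For every k ≥ 1, the decreasing permutation k(k−1)⋯21 is ES⁺-irreducible with respect to B = {1234, 4231}; that is, no entry of k(k−1)⋯21 is ES⁺-reducible with respect to B. -/
import Mathlib


/-- A permutation of arbitrary length: a length `n` together with a
bijection of `Fin n` (0-indexed positions and values). -/
abbrev PermAny : Type := Σ n : ℕ, Equiv.Perm (Fin n)

/-- `β` is contained as a pattern in `π`. -/
def ContainsPat {k n : ℕ} (β : Equiv.Perm (Fin k)) (π : Equiv.Perm (Fin n)) : Prop :=
  ∃ f : Fin k → Fin n, StrictMono f ∧ ∀ a b : Fin k, β a < β b ↔ π (f a) < π (f b)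

/-- `Av(B)`: the permutations avoiding every member of `B`. -/
def AvSet (B : Set PermAny) : Set PermAny :=
  {p | ∀ b ∈ B, ¬ ContainsPat b.2 p.2}

/-- A permutation class: closed downwards under pattern containment. -/
def IsPermClass (C : Set PermAny) : Prop :=
  ∀ p ∈ C, ∀ q : PermAny, ContainsPat q.2 p.2 → q ∈ C

/-- The positions `a,…,b` form an interval of `π`: the corresponding values
form a set of consecutive integers. -/
def IsIntervalAt {n : ℕ} (π : Equiv.Perm (Fin n)) (a b : Fin n) : Prop :=
  a ≤ b ∧ ∃ c : ℕ,
    (Finset.Icc a b).image (fun i => (π i : ℕ)) = Finset.Icc c (c + ((b : ℕ) - (a : ℕ)))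

/-- A permutation is simple when all of its intervals are trivial. -/
def IsSimplePerm {n : ℕ} (π : Equiv.Perm (Fin n)) : Prop :=
  ∀ a b : Fin n, IsIntervalAt π a b → a = b ∨ ((a : ℕ) = 0 ∧ (b : ℕ) = n - 1)

/-- `Z(B;π;g)`: the set of `B`-avoiding permutations of length `k + ‖g‖` whose
`k` smallest values occupy the positions prescribed by the gap vector `g`
and form the pattern `π`.  (0-indexed: entry `π r` sits at position
`g 0 + ⋯ + g r + r`.) -/
def ZSet (B : Set PermAny) {k : ℕ} (π : Equiv.Perm (Fin k)) (g : Fin (k + 1) → ℕ) :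
    Set (Equiv.Perm (Fin (k + ∑ j, g j))) :=
  {p | (⟨k + ∑ j, g j, p⟩ : PermAny) ∈ AvSet B ∧
    ∀ r : Fin k, ∀ i : Fin (k + ∑ j, g j),
      (i : ℕ) = (∑ j ∈ Finset.univ.filter fun j : Fin (k + 1) => (j : ℕ) ≤ (r : ℕ), g j)
          + (r : ℕ) →
      (p i : ℕ) = (π r : ℕ)}

/-- `J(π)`: the set of gap positions `j` such that `Z(B;π;g)` is empty whenever
`g j > 0`. -/
def JSet (B : Set PermAny) {k : ℕ} (π : Equiv.Perm (Fin k)) : Set (Fin (k + 1)) :=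
  {j | ∀ g : Fin (k + 1) → ℕ, 0 < g j → ZSet B π g = ∅}

/-- `d_r(π)`: delete the entry at position `r` from `π` and standardize. -/
def delEntry {k : ℕ} (π : Equiv.Perm (Fin (k + 1))) (r : Fin (k + 1)) : Equiv.Perm (Fin k) :=
  Equiv.removeNone ((finSuccEquiv' r).symm.trans (π.trans (finSuccEquiv' (π r))))

/-- `d_r(g)`: merge the gaps on either side of position `r`. -/
def delGap {k : ℕ} (g : Fin (k + 2) → ℕ) (r : Fin (k + 1)) : Fin (k + 1) → ℕ :=
  fun j =>
    if (j : ℕ) < (r : ℕ) then g (Fin.castSucc j)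
    else if (j : ℕ) = (r : ℕ) then g (Fin.castSucc j) + g j.succ
    else g j.succ

/-- The entry `π r` is ES-reducible for `π` with respect to `B`
(Zeilberger's original notion). -/
def ESRed (B : Set PermAny) {k : ℕ} (π : Equiv.Perm (Fin (k + 1))) (r : Fin (k + 1)) : Prop :=
  ∀ g : Fin (k + 2) → ℕ, (∀ j ∈ JSet B π, g j = 0) →
    (ZSet B π g).ncard = (ZSet B (delEntry π r) (delGap g r)).ncard

/-- The entry `π r` is ES⁺-reducible for `π` with respect to `B`. -/
def ESPlusRed (B : Set PermAny) {k : ℕ} (π : Equiv.Perm (Fin (k + 1))) (r : Fin (k + 1)) : Prop :=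
  ∀ g : Fin (k + 2) → ℕ, (ZSet B π g).Nonempty →
    (ZSet B π g).ncard = (ZSet B (delEntry π r) (delGap g r)).ncard

/-- `G_r(π)`: the largest lower order ideal of gap vectors `g` such that for all
`h ≤ g`, either `Z(B;π;h)` is nonempty or `Z(B;d_r(π);d_r(h))` is empty. -/
def GrSet (B : Set PermAny) {k : ℕ} (π : Equiv.Perm (Fin (k + 1))) (r : Fin (k + 1)) :
    Set (Fin (k + 2) → ℕ) :=
  {g | ∀ h : Fin (k + 2) → ℕ, h ≤ g →
    (ZSet B π h).Nonempty ∨ ZSet B (delEntry π r) (delGap h r) = ∅}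

/-- The permutation 4231 (0-indexed values). -/
noncomputable def p4231 : Equiv.Perm (Fin 4) := Equiv.ofBijective ![3, 1, 2, 0] (by decide)


/-! ### Auxiliary machinery -/

@[simp] lemma val_mk' {n a : ℕ} (h : a < n) : ((⟨a, h⟩ : Fin n) : ℕ) = a := rfl

lemma p4231_coe : ⇑p4231 = ![3, 1, 2, 0] := funext fun i => Equiv.ofBijective_apply _ _ i

lemma rev_val {n : ℕ} (s : Fin n) : (Fin.revPerm s : ℕ) = n - 1 - (s : ℕ) := by
  simp only [Fin.revPerm_apply, Fin.val_rev]; omega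

def quad {N : ℕ} (i0 i1 i2 i3 : Fin N) : Fin 4 → Fin N := fun a =>
  if (a : ℕ) = 0 then i0 else if (a : ℕ) = 1 then i1 else if (a : ℕ) = 2 then i2 else i3

lemma contains4231 {N : ℕ} (p : Equiv.Perm (Fin N)) (i0 i1 i2 i3 : Fin N)
    (hord : (i0 : ℕ) < i1 ∧ (i1 : ℕ) < i2 ∧ (i2 : ℕ) < i3)
    (hv : (p i3 : ℕ) < (p i1 : ℕ) ∧ (p i1 : ℕ) < (p i2 : ℕ) ∧ (p i2 : ℕ) < (p i0 : ℕ)) :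
    ContainsPat p4231 p := by
  refine ⟨quad i0 i1 i2 i3, ?_, ?_⟩
  · intro a b hab
    have h' : (a : ℕ) < (b : ℕ) := hab
    have ha := a.isLt
    have hb := b.isLt
    simp only [quad]
    split_ifs <;> rw [Fin.lt_def] <;> omega
  · intro a b
    rw [p4231_coe]
    fin_cases a <;> fin_cases b
    · exact iff_of_false (by decide) (fun h => by have h' : (p i0 : ℕ) < (p i0 : ℕ) := h; omega)
    · exact iff_of_false (by decide) (fun h => by have h' : (p i0 : ℕ) < (p i1 : ℕ) := h; omega)
    · exact iff_of_false (by decide) (fun h => by have h' : (p i0 : ℕ) < (p i2 : ℕ) := h; omega)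
    · exact iff_of_false (by decide) (fun h => by have h' : (p i0 : ℕ) < (p i3 : ℕ) := h; omega)
    · exact iff_of_true (by decide) (show p i1 < p i0 from Fin.lt_def.mpr (by omega))
    · exact iff_of_false (by decide) (fun h => by have h' : (p i1 : ℕ) < (p i1 : ℕ) := h; omega)
    · exact iff_of_true (by decide) (show p i1 < p i2 from Fin.lt_def.mpr (by omega))
    · exact iff_of_false (by decide) (fun h => by have h' : (p i1 : ℕ) < (p i3 : ℕ) := h; omega)
    · exact iff_of_true (by decide) (show p i2 < p i0 from Fin.lt_def.mpr (by omega))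
    · exact iff_of_false (by decide) (fun h => by have h' : (p i2 : ℕ) < (p i1 : ℕ) := h; omega)
    · exact iff_of_false (by decide) (fun h => by have h' : (p i2 : ℕ) < (p i2 : ℕ) := h; omega)
    · exact iff_of_false (by decide) (fun h => by have h' : (p i2 : ℕ) < (p i3 : ℕ) := h; omega)
    · exact iff_of_true (by decide) (show p i3 < p i0 from Fin.lt_def.mpr (by omega))
    · exact iff_of_true (by decide) (show p i3 < p i1 from Fin.lt_def.mpr (by omega))
    · exact iff_of_true (by decide) (show p i3 < p i2 from Fin.lt_def.mpr (by omega))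
    · exact iff_of_false (by decide) (fun h => by have h' : (p i3 : ℕ) < (p i3 : ℕ) := h; omega)

/-- value function for candidate permutations: two "large" values `l1, l2`
at positions `x, y`, all other values decreasing along positions. -/
def bval (N x y l1 l2 i : ℕ) : ℕ :=
  if i = x then l1 else if i = y then l2
  else N - 1 - i - (if i < x then 1 else 0) - (if i < y then 1 else 0)

lemma bval_lt {N x y l1 l2 : ℕ}
    (h : x < y ∧ y < N ∧ N - 3 < l1 ∧ l1 < N ∧ N - 3 < l2 ∧ l2 < N ∧ l1 ≠ l2)
    (i : ℕ) (hi : i < N) : bval N x y l1 l2 i < N := by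
  unfold bval; split_ifs <;> omega

lemma bval_small_le {N x y l1 l2 : ℕ}
    (h : x < y ∧ y < N ∧ N - 3 < l1 ∧ l1 < N ∧ N - 3 < l2 ∧ l2 < N ∧ l1 ≠ l2)
    (i : ℕ) (hi : i < N) (h1 : i ≠ x) (h2 : i ≠ y) : bval N x y l1 l2 i ≤ N - 3 := by
  unfold bval; split_ifs <;> omega

lemma bval_small_dec {N x y l1 l2 : ℕ}
    (h : x < y ∧ y < N ∧ N - 3 < l1 ∧ l1 < N ∧ N - 3 < l2 ∧ l2 < N ∧ l1 ≠ l2)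
    (i j : ℕ) (hi : i < N) (hj : j < N) (hix : i ≠ x) (hiy : i ≠ y) (hjx : j ≠ x) (hjy : j ≠ y)
    (hij : i < j) : bval N x y l1 l2 j < bval N x y l1 l2 i := by
  unfold bval; split_ifs <;> omega

lemma bval_inj {N x y l1 l2 : ℕ}
    (h : x < y ∧ y < N ∧ N - 3 < l1 ∧ l1 < N ∧ N - 3 < l2 ∧ l2 < N ∧ l1 ≠ l2) :
    ∀ i j, i < N → j < N → bval N x y l1 l2 i = bval N x y l1 l2 j → i = j := by
  intro i j hi hj hb; unfold bval at hb; split_ifs at hb <;> omega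

noncomputable def bigPerm (N x y l1 l2 : ℕ)
    (h : x < y ∧ y < N ∧ N - 3 < l1 ∧ l1 < N ∧ N - 3 < l2 ∧ l2 < N ∧ l1 ≠ l2) :
    Equiv.Perm (Fin N) :=
  Equiv.ofBijective (fun i => (⟨bval N x y l1 l2 i, bval_lt h i i.isLt⟩ : Fin N))
    (Finite.injective_iff_bijective.mp (by
      intro a b hab
      have := congrArg Fin.val hab
      exact Fin.ext (bval_inj h a b a.isLt b.isLt this)))

lemma bigPerm_apply {N x y l1 l2 : ℕ}
    (h : x < y ∧ y < N ∧ N - 3 < l1 ∧ l1 < N ∧ N - 3 < l2 ∧ l2 < N ∧ l1 ≠ l2) (i : Fin N) :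
    (bigPerm N x y l1 l2 h i : ℕ) = bval N x y l1 l2 i := by
  simp [bigPerm]

lemma bigPerm_ne {N x y l1 l2 l1' l2' : ℕ} (H) (H') (hx : x < N) (hne : l1 ≠ l1') :
    bigPerm N x y l1 l2 H ≠ bigPerm N x y l1' l2' H' := by
  intro h
  have h2 := congrArg (fun q : Equiv.Perm (Fin N) => (q ⟨x, hx⟩ : ℕ)) h
  simp only [bigPerm_apply, val_mk', bval, if_pos rfl] at h2
  exact hne h2

lemma not_contains_of_lt {n : ℕ} (β : Equiv.Perm (Fin 4)) (p : Equiv.Perm (Fin n)) (h : n < 4) :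
    ¬ ContainsPat β p := by
  rintro ⟨f, hf, -⟩
  have h1 : (f 0 : ℕ) < (f 1 : ℕ) := hf (by decide)
  have h2 : (f 1 : ℕ) < (f 2 : ℕ) := hf (by decide)
  have h3 : (f 2 : ℕ) < (f 3 : ℕ) := hf (by decide)
  have := (f 3).isLt
  omega

lemma avoid1234_two {N : ℕ} (p : Equiv.Perm (Fin N)) (x y : ℕ)
    (hsmall : ∀ i j : Fin N, (i : ℕ) ≠ x → (i : ℕ) ≠ y → (j : ℕ) ≠ x → (j : ℕ) ≠ y →
      (i : ℕ) < (j : ℕ) → (p j : ℕ) < (p i : ℕ)) :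
    ¬ ContainsPat (1 : Equiv.Perm (Fin 4)) p := by
  rintro ⟨f, hf, hpat⟩
  have key : ∀ a b : Fin 4, a < b → (p (f a) : ℕ) < (p (f b) : ℕ) := fun a b h => (hpat a b).1 h
  have hlt : ∀ a b : Fin 4, a < b → (f a : ℕ) < (f b : ℕ) := fun a b h => hf h
  have pair : ∀ a b : Fin 4, a < b →
      (f a : ℕ) = x ∨ (f a : ℕ) = y ∨ (f b : ℕ) = x ∨ (f b : ℕ) = y := by
    intro a b h
    by_contra hc
    push_neg at hc
    have := hsmall (f a) (f b) hc.1 hc.2.1 hc.2.2.1 hc.2.2.2 (hlt a b h)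
    have := key a b h
    omega
  have p01 := pair 0 1 (by decide)
  have p02 := pair 0 2 (by decide)
  have p03 := pair 0 3 (by decide)
  have p12 := pair 1 2 (by decide)
  have p13 := pair 1 3 (by decide)
  have p23 := pair 2 3 (by decide)
  have d01 := hlt 0 1 (by decide)
  have d12 := hlt 1 2 (by decide)
  have d23 := hlt 2 3 (by decide)
  omega

lemma avoid4231_two {N : ℕ} (p : Equiv.Perm (Fin N)) (x y : Fin N) (hxy : (x : ℕ) < (y : ℕ))
    (hsmall : ∀ i j : Fin N, (i : ℕ) ≠ (x : ℕ) → (i : ℕ) ≠ (y : ℕ) → (j : ℕ) ≠ (x : ℕ) →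
      (j : ℕ) ≠ (y : ℕ) → (i : ℕ) < (j : ℕ) → (p j : ℕ) < (p i : ℕ))
    (hval : ∀ i : Fin N, (i : ℕ) ≠ (x : ℕ) → (i : ℕ) ≠ (y : ℕ) →
      (p i : ℕ) < (p x : ℕ) ∧ (p i : ℕ) < (p y : ℕ))
    (hextra : (p x : ℕ) < (p y : ℕ) ∨ (y : ℕ) = (x : ℕ) + 1 ∨ (y : ℕ) = N - 1) :
    ¬ ContainsPat p4231 p := by
  rintro ⟨f, hf, hpat⟩
  simp only [p4231_coe] at hpat
  have h12 : (p (f 1) : ℕ) < (p (f 2) : ℕ) := (hpat 1 2).1 (by decide)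
  have h20 : (p (f 2) : ℕ) < (p (f 0) : ℕ) := (hpat 2 0).1 (by decide)
  have hf01 : (f 0 : ℕ) < (f 1 : ℕ) := hf (by decide)
  have hf12 : (f 1 : ℕ) < (f 2 : ℕ) := hf (by decide)
  have hf23 : (f 2 : ℕ) < (f 3 : ℕ) := hf (by decide)
  have hf2 : (f 2 : ℕ) = (x : ℕ) ∨ (f 2 : ℕ) = (y : ℕ) := by
    by_contra hc
    push_neg at hc
    by_cases hc1 : (f 1 : ℕ) = (x : ℕ) ∨ (f 1 : ℕ) = (y : ℕ)
    · rcases hc1 with h | h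
      · have hx : f 1 = x := Fin.ext h
        have := (hval (f 2) hc.1 hc.2).1
        rw [hx] at h12; omega
      · have hy : f 1 = y := Fin.ext h
        have := (hval (f 2) hc.1 hc.2).2
        rw [hy] at h12; omega
    · push_neg at hc1
      have := hsmall (f 1) (f 2) hc1.1 hc1.2 hc.1 hc.2 hf12
      omega
  have hf0 : (f 0 : ℕ) = (x : ℕ) ∨ (f 0 : ℕ) = (y : ℕ) := by
    by_contra hc
    push_neg at hc
    have h0 := hval (f 0) hc.1 hc.2
    rcases hf2 with h | h
    · have : f 2 = x := Fin.ext h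
      rw [this] at h20; omega
    · have : f 2 = y := Fin.ext h
      rw [this] at h20; omega
  have hfx : f 0 = x ∧ f 2 = y := by
    rcases hf0 with h0 | h0 <;> rcases hf2 with h2 | h2
    · omega
    · exact ⟨Fin.ext h0, Fin.ext h2⟩
    · omega
    · omega
  have hpyx : (p y : ℕ) < (p x : ℕ) := by rw [← hfx.1, ← hfx.2]; exact h20
  rcases hextra with h | h | h
  · omega
  · have e1 := hfx.1 ▸ hf01
    have e2 := hfx.2 ▸ hf12
    omega
  · have h3 := (f 3).isLt
    have := hfx.2 ▸ hf23
    omega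

/-! ### Indicator sums -/

lemma sum_ind_filter (K a c t : ℕ) (h : a < K) :
    (∑ j ∈ Finset.univ.filter (fun j : Fin K => (j : ℕ) ≤ t), if (j : ℕ) = a then c else 0)
      = if a ≤ t then c else 0 := by
  have h1 : ∀ j : Fin K, ((j : ℕ) = a) = (j = ⟨a, h⟩) :=
    fun j => propext ⟨fun hh => Fin.ext hh, fun hh => congrArg Fin.val hh⟩
  simp_rw [h1]
  rw [Finset.sum_ite_eq']
  simp [Finset.mem_filter]

lemma sum_ind_univ (K a c : ℕ) (h : a < K) :
    (∑ j : Fin K, if (j : ℕ) = a then c else 0) = c := by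
  have h1 : ∀ j : Fin K, ((j : ℕ) = a) = (j = ⟨a, h⟩) :=
    fun j => propext ⟨fun hh => Fin.ext hh, fun hh => congrArg Fin.val hh⟩
  simp_rw [h1]
  rw [Finset.sum_ite_eq']
  simp

/-! ### The gap vectors used -/

def gOnes (K a : ℕ) : Fin K → ℕ := fun j => if (j : ℕ) = a ∨ (j : ℕ) = a + 1 then 1 else 0

def gTwo (K a : ℕ) : Fin K → ℕ := fun j => if (j : ℕ) = a then 2 else 0

def gThree0 : Fin 2 → ℕ := fun j => if (j : ℕ) = 1 then 3 else 0

lemma sum_gOnes (K a : ℕ) (h : a + 1 < K) : (∑ j, gOnes K a j) = 2 := by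
  have hsplit : ∀ j ∈ Finset.univ, gOnes K a j
      = (if (j : ℕ) = a then 1 else 0) + (if (j : ℕ) = a + 1 then 1 else 0) := by
    intro j _; unfold gOnes; split_ifs <;> omega
  rw [Finset.sum_congr rfl hsplit, Finset.sum_add_distrib,
    sum_ind_univ K a 1 (by omega), sum_ind_univ K (a+1) 1 h]

lemma sum_gOnes_filter (K a : ℕ) (h : a + 1 < K) (t : ℕ) :
    (∑ j ∈ Finset.univ.filter (fun j : Fin K => (j : ℕ) ≤ t), gOnes K a j)
      = (if a ≤ t then 1 else 0) + (if a + 1 ≤ t then 1 else 0) := by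
  have hsplit : ∀ j ∈ Finset.univ.filter (fun j : Fin K => (j : ℕ) ≤ t), gOnes K a j
      = (if (j : ℕ) = a then 1 else 0) + (if (j : ℕ) = a + 1 then 1 else 0) := by
    intro j _; unfold gOnes; split_ifs <;> omega
  rw [Finset.sum_congr rfl hsplit, Finset.sum_add_distrib,
    sum_ind_filter K a 1 t (by omega), sum_ind_filter K (a+1) 1 t h]

lemma sum_gTwo (K a : ℕ) (h : a < K) : (∑ j, gTwo K a j) = 2 := by
  unfold gTwo; exact sum_ind_univ K a 2 h

lemma sum_gTwo_filter (K a : ℕ) (h : a < K) (t : ℕ) :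
    (∑ j ∈ Finset.univ.filter (fun j : Fin K => (j : ℕ) ≤ t), gTwo K a j)
      = if a ≤ t then 2 else 0 := by
  unfold gTwo; exact sum_ind_filter K a 2 t h

lemma sum_gThree0 : (∑ j, gThree0 j) = 3 := by
  unfold gThree0; exact sum_ind_univ 2 1 3 (by omega)

lemma sum_gThree0_filter (t : ℕ) :
    (∑ j ∈ Finset.univ.filter (fun j : Fin 2 => (j : ℕ) ≤ t), gThree0 j)
      = if 1 ≤ t then 3 else 0 := by
  unfold gThree0; exact sum_ind_filter 2 1 3 t (by omega)

/-! ### delGap and delEntry computations -/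

lemma delGap_gOnes_mid (m : ℕ) (r : Fin (m+1)) (ha : (r : ℕ) + 1 ≤ m) :
    delGap (gOnes (m+2) (r : ℕ)) r = gTwo (m+1) (r : ℕ) := by
  funext j
  have hj := j.isLt
  simp only [delGap, gOnes, gTwo, Fin.coe_castSucc, Fin.val_succ]
  split_ifs <;> omega

lemma delGap_gOnes_last (m : ℕ) (hm : 1 ≤ m) (r : Fin (m+1)) (hr : (r : ℕ) = m) :
    delGap (gOnes (m+2) (m-1)) r = gOnes (m+1) (m-1) := by
  funext j
  have hj := j.isLt
  simp only [delGap, gOnes, Fin.coe_castSucc, Fin.val_succ]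
  split_ifs <;> omega

lemma delGap_gThree0 (r : Fin 1) : delGap gThree0 r = fun _ => 3 := by
  funext j
  have hj := j.isLt
  have hr := r.isLt
  simp only [delGap, gThree0, Fin.coe_castSucc, Fin.val_succ]
  split_ifs <;> omega

lemma delEntry_rev (m : ℕ) (r : Fin (m+1)) :
    delEntry (Fin.revPerm : Equiv.Perm (Fin (m+1))) r = (Fin.revPerm : Equiv.Perm (Fin m)) := by
  have key : ∀ i : Fin m,
      ((finSuccEquiv' r).symm.trans ((Fin.revPerm : Equiv.Perm (Fin (m+1))).trans
        (finSuccEquiv' (Fin.revPerm r)))) (some i) = some (Fin.revPerm i) := by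
    intro i
    rw [Equiv.trans_apply, Equiv.trans_apply, finSuccEquiv'_symm_some]
    rcases lt_or_ge (Fin.castSucc i) r with h | h
    · rw [Fin.succAbove_of_castSucc_lt _ _ h]
      simp only [Fin.revPerm_apply, Fin.rev_castSucc]
      exact finSuccEquiv'_above (by
        simp only [Fin.le_def, Fin.val_rev, Fin.coe_castSucc]
        have hi : (i : ℕ) < (r : ℕ) := h
        omega)
    · rw [Fin.succAbove_of_le_castSucc _ _ h]
      simp only [Fin.revPerm_apply, Fin.rev_succ]
      exact finSuccEquiv'_below (by
        simp only [Fin.lt_def, Fin.val_rev, Fin.coe_castSucc]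
        have hi : (r : ℕ) ≤ (i : ℕ) := h
        omega)
  ext i
  have h2 := Equiv.removeNone_some (e :=
    ((finSuccEquiv' r).symm.trans ((Fin.revPerm : Equiv.Perm (Fin (m+1))).trans
      (finSuccEquiv' (Fin.revPerm r))))) (x := i) ⟨_, key i⟩
  rw [key i] at h2
  have h3 := Option.some_injective _ h2
  simp only [delEntry, Fin.revPerm_apply] at h3 ⊢
  rw [h3]

/-! ### ZSet membership -/

lemma mem_ZSet_iff {k : ℕ} (π : Equiv.Perm (Fin k)) (g : Fin (k+1) → ℕ)
    (p : Equiv.Perm (Fin (k + ∑ j, g j))) :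
    p ∈ ZSet ({⟨4, 1⟩, ⟨4, p4231⟩} : Set PermAny) π g ↔
      ((¬ ContainsPat (1 : Equiv.Perm (Fin 4)) p ∧ ¬ ContainsPat p4231 p) ∧
      ∀ r : Fin k, ∀ i : Fin (k + ∑ j, g j),
        (i : ℕ) = (∑ j ∈ Finset.univ.filter fun j : Fin (k + 1) => (j : ℕ) ≤ (r : ℕ), g j)
            + (r : ℕ) →
        (p i : ℕ) = (π r : ℕ)) := by
  unfold ZSet AvSet
  simp only [Set.mem_setOf_eq]
  constructor
  · rintro ⟨hav, hpin⟩
    exact ⟨⟨hav ⟨4, 1⟩ (Set.mem_insert _ _),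
      hav ⟨4, p4231⟩ (Set.mem_insert_of_mem _ rfl)⟩, hpin⟩
  · rintro ⟨⟨h1, h2⟩, hpin⟩
    refine ⟨?_, hpin⟩
    rintro b hb
    simp only [Set.mem_insert_iff, Set.mem_singleton_iff] at hb
    rcases hb with rfl | rfl
    · exact h1
    · exact h2


/-! ### Characterization of the original-side ZSet -/

lemma orig_char (m a : ℕ) (ha : a + 1 ≤ m)
    (H1 : a < a + 2 ∧ a + 2 < m + 1 + ∑ j, gOnes (m+2) a j ∧
      (m + 1 + ∑ j, gOnes (m+2) a j) - 3 < m + 1 ∧ m + 1 < m + 1 + ∑ j, gOnes (m+2) a j ∧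
      (m + 1 + ∑ j, gOnes (m+2) a j) - 3 < m + 2 ∧ m + 2 < m + 1 + ∑ j, gOnes (m+2) a j ∧
      m + 1 ≠ m + 2) :
    ZSet ({⟨4, 1⟩, ⟨4, p4231⟩} : Set PermAny) (Fin.revPerm : Equiv.Perm (Fin (m+1)))
        (gOnes (m+2) a)
      = {bigPerm (m + 1 + ∑ j, gOnes (m+2) a j) a (a+2) (m+1) (m+2) H1} := by
  have hsum : (∑ j, gOnes (m+2) a j) = 2 := sum_gOnes (m+2) a (by omega)
  have hsum' : (∑ j : Fin (m + 1 + 1), gOnes (m+2) a j) = 2 := hsum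
  have hN : m + 1 + (∑ j, gOnes (m+2) a j) = m + 3 := by omega
  have hpos : ∀ s : Fin (m+1),
      (∑ j ∈ Finset.univ.filter fun j : Fin (m+2) => (j : ℕ) ≤ (s : ℕ), gOnes (m+2) a j)
        = (if a ≤ (s : ℕ) then 1 else 0) + (if a + 1 ≤ (s : ℕ) then 1 else 0) :=
    fun s => sum_gOnes_filter (m+2) a (by omega) (s : ℕ)
  ext p
  rw [mem_ZSet_iff, Set.mem_singleton_iff]
  constructor
  · rintro ⟨⟨hav1, hav2⟩, hpin⟩
    have hsmallv : ∀ i : Fin (m + 1 + ∑ j, gOnes (m+2) a j), (i : ℕ) ≠ a → (i : ℕ) ≠ a + 2 →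
        (p i : ℕ) = bval (m+3) a (a+2) (m+1) (m+2) (i : ℕ) := by
      intro i h1 h2
      have hiN : (i : ℕ) < m + 3 := by have := i.isLt; omega
      by_cases hc1 : (i : ℕ) < a
      · have hp := hpin ⟨(i : ℕ), by omega⟩ i (by rw [hpos]; simp only [val_mk']; split_ifs <;> omega)
        rw [rev_val] at hp
        rw [hp]
        unfold bval; simp only [val_mk']; split_ifs <;> omega
      · by_cases hc2 : (i : ℕ) = a + 1
        · have hp := hpin ⟨a, by omega⟩ i (by rw [hpos]; simp only [val_mk']; split_ifs <;> omega)
          rw [rev_val] at hp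
          rw [hp]
          unfold bval; simp only [val_mk']; split_ifs <;> omega
        · have hc3 : a + 3 ≤ (i : ℕ) := by omega
          have hp := hpin ⟨(i : ℕ) - 2, by omega⟩ i
            (by rw [hpos]; simp only [val_mk']; split_ifs <;> omega)
          rw [rev_val] at hp
          rw [hp]
          unfold bval; simp only [val_mk']; split_ifs <;> omega
    have hm1lt : m + 1 < m + 1 + ∑ j, gOnes (m+2) a j := by omega
    have hm2lt : m + 2 < m + 1 + ∑ j, gOnes (m+2) a j := by omega
    set z1 := p.symm ⟨m+1, hm1lt⟩ with hz1def
    set z2 := p.symm ⟨m+2, hm2lt⟩ with hz2def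
    have hz1v : (p z1 : ℕ) = m + 1 := by rw [hz1def, Equiv.apply_symm_apply]
    have hz2v : (p z2 : ℕ) = m + 2 := by rw [hz2def, Equiv.apply_symm_apply]
    have hz1p : (z1 : ℕ) = a ∨ (z1 : ℕ) = a + 2 := by
      by_contra hc
      push_neg at hc
      have hb := hsmallv z1 hc.1 hc.2
      have hle := bval_small_le (N := m+3) (x := a) (y := a+2) (l1 := m+1) (l2 := m+2)
        (by omega) (z1 : ℕ) (by have := z1.isLt; omega) hc.1 hc.2
      omega
    have hz2p : (z2 : ℕ) = a ∨ (z2 : ℕ) = a + 2 := by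
      by_contra hc
      push_neg at hc
      have hb := hsmallv z2 hc.1 hc.2
      have hle := bval_small_le (N := m+3) (x := a) (y := a+2) (l1 := m+1) (l2 := m+2)
        (by omega) (z2 : ℕ) (by have := z2.isLt; omega) hc.1 hc.2
      omega
    have hz12 : (z1 : ℕ) ≠ (z2 : ℕ) := by
      intro h
      have h' : z1 = z2 := Fin.ext h
      rw [h'] at hz1v
      omega
    rcases hz1p with h1 | h1 <;> rcases hz2p with h2 | h2
    · omega
    · -- good case : p equals the candidate
      apply Equiv.ext
      intro i
      refine Fin.ext ?_
      rw [bigPerm_apply]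
      by_cases hia : (i : ℕ) = a
      · have : i = z1 := Fin.ext (by omega)
        rw [this, hz1v]
        unfold bval; split_ifs <;> omega
      · by_cases hiy : (i : ℕ) = a + 2
        · have : i = z2 := Fin.ext (by omega)
          rw [this, hz2v]
          unfold bval; split_ifs <;> omega
        · rw [hsmallv i hia hiy]
          unfold bval; split_ifs <;> omega
    · -- bad case : p contains 4231
      exfalso
      apply hav2
      have hb0 : a < m + 1 + ∑ j, gOnes (m+2) a j := by omega
      have hb1 : a + 1 < m + 1 + ∑ j, gOnes (m+2) a j := by omega
      have hb2 : a + 2 < m + 1 + ∑ j, gOnes (m+2) a j := by omega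
      have hb3 : a + 3 < m + 1 + ∑ j, gOnes (m+2) a j := by omega
      have hv1 : (p ⟨a, hb0⟩ : ℕ) = m + 2 := by
        have he : (⟨a, hb0⟩ : Fin (m + 1 + ∑ j, gOnes (m+2) a j)) = z2 :=
          Fin.ext (by simp only [val_mk']; omega)
        rw [he, hz2v]
      have hv2 : (p ⟨a + 1, hb1⟩ : ℕ) = m - a := by
        rw [hsmallv ⟨a+1, hb1⟩ (by simp only [val_mk']; omega) (by simp only [val_mk']; omega)]
        unfold bval; simp only [val_mk']; split_ifs <;> omega
      have hv3 : (p ⟨a + 2, hb2⟩ : ℕ) = m + 1 := by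
        have he : (⟨a + 2, hb2⟩ : Fin (m + 1 + ∑ j, gOnes (m+2) a j)) = z1 :=
          Fin.ext (by simp only [val_mk']; omega)
        rw [he, hz1v]
      have hv4 : (p ⟨a + 3, hb3⟩ : ℕ) = m - a - 1 := by
        rw [hsmallv ⟨a+3, hb3⟩ (by simp only [val_mk']; omega) (by simp only [val_mk']; omega)]
        unfold bval; simp only [val_mk']; split_ifs <;> omega
      exact contains4231 p ⟨a, hb0⟩ ⟨a+1, hb1⟩ ⟨a+2, hb2⟩ ⟨a+3, hb3⟩
        (by refine ⟨?_, ?_, ?_⟩ <;> (simp only [val_mk']; omega))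
        (by rw [hv1, hv2, hv3, hv4]; omega)
    · omega
  · rintro rfl
    refine ⟨⟨?_, ?_⟩, ?_⟩
    · apply avoid1234_two _ a (a+2)
      intro i j hi1 hi2 hj1 hj2 hij
      rw [bigPerm_apply, bigPerm_apply]
      exact bval_small_dec (by omega) (i : ℕ) (j : ℕ) i.isLt j.isLt hi1 hi2 hj1 hj2 hij
    · apply avoid4231_two _ ⟨a, by omega⟩ ⟨a+2, by omega⟩ (by simp only [val_mk']; omega)
      · intro i j hi1 hi2 hj1 hj2 hij
        simp only [val_mk'] at hi1 hi2 hj1 hj2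
        rw [bigPerm_apply, bigPerm_apply]
        exact bval_small_dec (by omega) (i : ℕ) (j : ℕ) i.isLt j.isLt hi1 hi2 hj1 hj2 hij
      · intro i hi1 hi2
        simp only [val_mk'] at hi1 hi2
        rw [bigPerm_apply, bigPerm_apply, bigPerm_apply]
        have hle := bval_small_le (N := m + 1 + ∑ j, gOnes (m+2) a j) (x := a) (y := a+2)
          (l1 := m+1) (l2 := m+2) (by omega) (i : ℕ) i.isLt hi1 hi2
        constructor
        · unfold bval; simp only [val_mk']; split_ifs <;> omega
        · unfold bval; simp only [val_mk']; split_ifs <;> omega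
      · left
        rw [bigPerm_apply, bigPerm_apply]
        unfold bval; simp only [val_mk']; split_ifs <;> omega
    · intro s i hi
      rw [hpos s] at hi
      rw [bigPerm_apply, rev_val]
      have hs := s.isLt
      have hiN := i.isLt
      unfold bval
      split_ifs at hi ⊢ <;> omega


/-! ### Characterization of the deleted-side ZSets -/

lemma d1_char (m a : ℕ) (ha : a + 1 ≤ m)
    (H1 : a < a + 1 ∧ a + 1 < m + ∑ j, gTwo (m+1) a j ∧
      (m + ∑ j, gTwo (m+1) a j) - 3 < m ∧ m < m + ∑ j, gTwo (m+1) a j ∧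
      (m + ∑ j, gTwo (m+1) a j) - 3 < m + 1 ∧ m + 1 < m + ∑ j, gTwo (m+1) a j ∧
      m ≠ m + 1)
    (H2 : a < a + 1 ∧ a + 1 < m + ∑ j, gTwo (m+1) a j ∧
      (m + ∑ j, gTwo (m+1) a j) - 3 < m + 1 ∧ m + 1 < m + ∑ j, gTwo (m+1) a j ∧
      (m + ∑ j, gTwo (m+1) a j) - 3 < m ∧ m < m + ∑ j, gTwo (m+1) a j ∧
      m + 1 ≠ m) :
    ZSet ({⟨4, 1⟩, ⟨4, p4231⟩} : Set PermAny) (Fin.revPerm : Equiv.Perm (Fin m))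
        (gTwo (m+1) a)
      = {bigPerm (m + ∑ j, gTwo (m+1) a j) a (a+1) m (m+1) H1,
         bigPerm (m + ∑ j, gTwo (m+1) a j) a (a+1) (m+1) m H2} := by
  have hsum : (∑ j, gTwo (m+1) a j) = 2 := sum_gTwo (m+1) a (by omega)
  have hpos : ∀ s : Fin m,
      (∑ j ∈ Finset.univ.filter fun j : Fin (m+1) => (j : ℕ) ≤ (s : ℕ), gTwo (m+1) a j)
        = if a ≤ (s : ℕ) then 2 else 0 :=
    fun s => sum_gTwo_filter (m+1) a (by omega) (s : ℕ)
  ext p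
  rw [mem_ZSet_iff, Set.mem_insert_iff, Set.mem_singleton_iff]
  constructor
  · rintro ⟨⟨hav1, hav2⟩, hpin⟩
    have hsmallv : ∀ i : Fin (m + ∑ j, gTwo (m+1) a j), (i : ℕ) ≠ a → (i : ℕ) ≠ a + 1 →
        (p i : ℕ) = bval (m+2) a (a+1) m (m+1) (i : ℕ) := by
      intro i h1 h2
      have hiN : (i : ℕ) < m + 2 := by have := i.isLt; omega
      by_cases hc1 : (i : ℕ) < a
      · have hp := hpin ⟨(i : ℕ), by omega⟩ i (by rw [hpos]; simp only [val_mk']; split_ifs <;> omega)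
        rw [rev_val] at hp
        rw [hp]
        unfold bval; simp only [val_mk']; split_ifs <;> omega
      · have hc3 : a + 2 ≤ (i : ℕ) := by omega
        have hp := hpin ⟨(i : ℕ) - 2, by omega⟩ i
          (by rw [hpos]; simp only [val_mk']; split_ifs <;> omega)
        rw [rev_val] at hp
        rw [hp]
        unfold bval; simp only [val_mk']; split_ifs <;> omega
    have hm1lt : m < m + ∑ j, gTwo (m+1) a j := by omega
    have hm2lt : m + 1 < m + ∑ j, gTwo (m+1) a j := by omega
    set z1 := p.symm ⟨m, hm1lt⟩ with hz1def
    set z2 := p.symm ⟨m+1, hm2lt⟩ with hz2def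
    have hz1v : (p z1 : ℕ) = m := by rw [hz1def, Equiv.apply_symm_apply]
    have hz2v : (p z2 : ℕ) = m + 1 := by rw [hz2def, Equiv.apply_symm_apply]
    have hz1p : (z1 : ℕ) = a ∨ (z1 : ℕ) = a + 1 := by
      by_contra hc
      push_neg at hc
      have hb := hsmallv z1 hc.1 hc.2
      have hle := bval_small_le (N := m+2) (x := a) (y := a+1) (l1 := m) (l2 := m+1)
        (by omega) (z1 : ℕ) (by have := z1.isLt; omega) hc.1 hc.2
      omega
    have hz2p : (z2 : ℕ) = a ∨ (z2 : ℕ) = a + 1 := by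
      by_contra hc
      push_neg at hc
      have hb := hsmallv z2 hc.1 hc.2
      have hle := bval_small_le (N := m+2) (x := a) (y := a+1) (l1 := m) (l2 := m+1)
        (by omega) (z2 : ℕ) (by have := z2.isLt; omega) hc.1 hc.2
      omega
    have hz12 : (z1 : ℕ) ≠ (z2 : ℕ) := by
      intro h
      have h' : z1 = z2 := Fin.ext h
      rw [h'] at hz1v
      omega
    rcases hz1p with h1 | h1 <;> rcases hz2p with h2 | h2
    · omega
    · -- z1 at a, z2 at a+1 : first candidate
      left
      apply Equiv.ext
      intro i
      refine Fin.ext ?_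
      rw [bigPerm_apply]
      by_cases hia : (i : ℕ) = a
      · have he : i = z1 := Fin.ext (by omega)
        rw [he, hz1v]
        unfold bval; split_ifs <;> omega
      · by_cases hiy : (i : ℕ) = a + 1
        · have he : i = z2 := Fin.ext (by omega)
          rw [he, hz2v]
          unfold bval; split_ifs <;> omega
        · rw [hsmallv i hia hiy]
          unfold bval; split_ifs <;> omega
    · -- z1 at a+1, z2 at a : second candidate
      right
      apply Equiv.ext
      intro i
      refine Fin.ext ?_
      rw [bigPerm_apply]
      by_cases hia : (i : ℕ) = a
      · have he : i = z2 := Fin.ext (by omega)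
        rw [he, hz2v]
        unfold bval; split_ifs <;> omega
      · by_cases hiy : (i : ℕ) = a + 1
        · have he : i = z1 := Fin.ext (by omega)
          rw [he, hz1v]
          unfold bval; split_ifs <;> omega
        · rw [hsmallv i hia hiy]
          unfold bval; split_ifs <;> omega
    · omega
  · rintro (rfl | rfl) <;>
    · refine ⟨⟨?_, ?_⟩, ?_⟩
      · apply avoid1234_two _ a (a+1)
        intro i j hi1 hi2 hj1 hj2 hij
        rw [bigPerm_apply, bigPerm_apply]
        exact bval_small_dec (by omega) (i : ℕ) (j : ℕ) i.isLt j.isLt hi1 hi2 hj1 hj2 hij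
      · apply avoid4231_two _ ⟨a, by omega⟩ ⟨a+1, by omega⟩ (by simp only [val_mk']; omega)
        · intro i j hi1 hi2 hj1 hj2 hij
          simp only [val_mk'] at hi1 hi2 hj1 hj2
          rw [bigPerm_apply, bigPerm_apply]
          exact bval_small_dec (by omega) (i : ℕ) (j : ℕ) i.isLt j.isLt hi1 hi2 hj1 hj2 hij
        · intro i hi1 hi2
          simp only [val_mk'] at hi1 hi2
          rw [bigPerm_apply, bigPerm_apply, bigPerm_apply]
          constructor
          · unfold bval; simp only [val_mk']; split_ifs <;> omega
          · unfold bval; simp only [val_mk']; split_ifs <;> omega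
        · right; left
          simp only [val_mk']
      · intro s i hi
        rw [hpos s] at hi
        rw [bigPerm_apply, rev_val]
        have hs := s.isLt
        have hiN := i.isLt
        unfold bval
        split_ifs at hi ⊢ <;> omega

lemma d2_char (m : ℕ) (hm : 1 ≤ m)
    (H1 : m - 1 < m + 1 ∧ m + 1 < m + ∑ j, gOnes (m+1) (m-1) j ∧
      (m + ∑ j, gOnes (m+1) (m-1) j) - 3 < m ∧ m < m + ∑ j, gOnes (m+1) (m-1) j ∧
      (m + ∑ j, gOnes (m+1) (m-1) j) - 3 < m + 1 ∧ m + 1 < m + ∑ j, gOnes (m+1) (m-1) j ∧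
      m ≠ m + 1)
    (H2 : m - 1 < m + 1 ∧ m + 1 < m + ∑ j, gOnes (m+1) (m-1) j ∧
      (m + ∑ j, gOnes (m+1) (m-1) j) - 3 < m + 1 ∧ m + 1 < m + ∑ j, gOnes (m+1) (m-1) j ∧
      (m + ∑ j, gOnes (m+1) (m-1) j) - 3 < m ∧ m < m + ∑ j, gOnes (m+1) (m-1) j ∧
      m + 1 ≠ m) :
    ZSet ({⟨4, 1⟩, ⟨4, p4231⟩} : Set PermAny) (Fin.revPerm : Equiv.Perm (Fin m))
        (gOnes (m+1) (m-1))
      = {bigPerm (m + ∑ j, gOnes (m+1) (m-1) j) (m-1) (m+1) m (m+1) H1,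
         bigPerm (m + ∑ j, gOnes (m+1) (m-1) j) (m-1) (m+1) (m+1) m H2} := by
  have hsum : (∑ j, gOnes (m+1) (m-1) j) = 2 := sum_gOnes (m+1) (m-1) (by omega)
  have hpos : ∀ s : Fin m,
      (∑ j ∈ Finset.univ.filter fun j : Fin (m+1) => (j : ℕ) ≤ (s : ℕ), gOnes (m+1) (m-1) j)
        = (if m - 1 ≤ (s : ℕ) then 1 else 0) + (if m - 1 + 1 ≤ (s : ℕ) then 1 else 0) :=
    fun s => sum_gOnes_filter (m+1) (m-1) (by omega) (s : ℕ)
  ext p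
  rw [mem_ZSet_iff, Set.mem_insert_iff, Set.mem_singleton_iff]
  constructor
  · rintro ⟨⟨hav1, hav2⟩, hpin⟩
    have hsmallv : ∀ i : Fin (m + ∑ j, gOnes (m+1) (m-1) j), (i : ℕ) ≠ m - 1 → (i : ℕ) ≠ m + 1 →
        (p i : ℕ) = bval (m+2) (m-1) (m+1) m (m+1) (i : ℕ) := by
      intro i h1 h2
      have hiN : (i : ℕ) < m + 2 := by have := i.isLt; omega
      by_cases hc1 : (i : ℕ) < m - 1
      · have hp := hpin ⟨(i : ℕ), by omega⟩ i (by rw [hpos]; simp only [val_mk']; split_ifs <;> omega)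
        rw [rev_val] at hp
        rw [hp]
        unfold bval; simp only [val_mk']; split_ifs <;> omega
      · have hc3 : (i : ℕ) = m := by omega
        have hp := hpin ⟨m - 1, by omega⟩ i
          (by rw [hpos]; simp only [val_mk']; split_ifs <;> omega)
        rw [rev_val] at hp
        rw [hp]
        unfold bval; simp only [val_mk']; split_ifs <;> omega
    have hm1lt : m < m + ∑ j, gOnes (m+1) (m-1) j := by omega
    have hm2lt : m + 1 < m + ∑ j, gOnes (m+1) (m-1) j := by omega
    set z1 := p.symm ⟨m, hm1lt⟩ with hz1def
    set z2 := p.symm ⟨m+1, hm2lt⟩ with hz2def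
    have hz1v : (p z1 : ℕ) = m := by rw [hz1def, Equiv.apply_symm_apply]
    have hz2v : (p z2 : ℕ) = m + 1 := by rw [hz2def, Equiv.apply_symm_apply]
    have hz1p : (z1 : ℕ) = m - 1 ∨ (z1 : ℕ) = m + 1 := by
      by_contra hc
      push_neg at hc
      have hb := hsmallv z1 hc.1 hc.2
      have hle := bval_small_le (N := m+2) (x := m-1) (y := m+1) (l1 := m) (l2 := m+1)
        (by omega) (z1 : ℕ) (by have := z1.isLt; omega) hc.1 hc.2
      omega
    have hz2p : (z2 : ℕ) = m - 1 ∨ (z2 : ℕ) = m + 1 := by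
      by_contra hc
      push_neg at hc
      have hb := hsmallv z2 hc.1 hc.2
      have hle := bval_small_le (N := m+2) (x := m-1) (y := m+1) (l1 := m) (l2 := m+1)
        (by omega) (z2 : ℕ) (by have := z2.isLt; omega) hc.1 hc.2
      omega
    have hz12 : (z1 : ℕ) ≠ (z2 : ℕ) := by
      intro h
      have h' : z1 = z2 := Fin.ext h
      rw [h'] at hz1v
      omega
    rcases hz1p with h1 | h1 <;> rcases hz2p with h2 | h2
    · omega
    · left
      apply Equiv.ext
      intro i
      refine Fin.ext ?_
      rw [bigPerm_apply]
      by_cases hia : (i : ℕ) = m - 1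
      · have he : i = z1 := Fin.ext (by omega)
        rw [he, hz1v]
        unfold bval; split_ifs <;> omega
      · by_cases hiy : (i : ℕ) = m + 1
        · have he : i = z2 := Fin.ext (by omega)
          rw [he, hz2v]
          unfold bval; split_ifs <;> omega
        · rw [hsmallv i hia hiy]
          unfold bval; split_ifs <;> omega
    · right
      apply Equiv.ext
      intro i
      refine Fin.ext ?_
      rw [bigPerm_apply]
      by_cases hia : (i : ℕ) = m - 1
      · have he : i = z2 := Fin.ext (by omega)
        rw [he, hz2v]
        unfold bval; split_ifs <;> omega
      · by_cases hiy : (i : ℕ) = m + 1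
        · have he : i = z1 := Fin.ext (by omega)
          rw [he, hz1v]
          unfold bval; split_ifs <;> omega
        · rw [hsmallv i hia hiy]
          unfold bval; split_ifs <;> omega
    · omega
  · rintro (rfl | rfl) <;>
    · refine ⟨⟨?_, ?_⟩, ?_⟩
      · apply avoid1234_two _ (m-1) (m+1)
        intro i j hi1 hi2 hj1 hj2 hij
        rw [bigPerm_apply, bigPerm_apply]
        exact bval_small_dec (by omega) (i : ℕ) (j : ℕ) i.isLt j.isLt hi1 hi2 hj1 hj2 hij
      · apply avoid4231_two _ ⟨m-1, by omega⟩ ⟨m+1, by omega⟩ (by simp only [val_mk']; omega)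
        · intro i j hi1 hi2 hj1 hj2 hij
          simp only [val_mk'] at hi1 hi2 hj1 hj2
          rw [bigPerm_apply, bigPerm_apply]
          exact bval_small_dec (by omega) (i : ℕ) (j : ℕ) i.isLt j.isLt hi1 hi2 hj1 hj2 hij
        · intro i hi1 hi2
          simp only [val_mk'] at hi1 hi2
          rw [bigPerm_apply, bigPerm_apply, bigPerm_apply]
          constructor
          · unfold bval; simp only [val_mk']; split_ifs <;> omega
          · unfold bval; simp only [val_mk']; split_ifs <;> omega
        · first
          | (left
             rw [bigPerm_apply, bigPerm_apply]
             unfold bval; simp only [val_mk']; split_ifs <;> omega)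
          | (right; right
             simp only [val_mk']
             omega)
      · intro s i hi
        rw [hpos s] at hi
        rw [bigPerm_apply, rev_val]
        have hs := s.isLt
        have hiN := i.isLt
        unfold bval
        split_ifs at hi ⊢ <;> omega

/-! ### The case m = 0 -/

lemma m0_orig_char :
    ZSet ({⟨4, 1⟩, ⟨4, p4231⟩} : Set PermAny) (Fin.revPerm : Equiv.Perm (Fin (0+1))) gThree0
      = {p : Equiv.Perm (Fin (0 + 1 + ∑ j : Fin (0+1+1), gThree0 j)) |
          (∀ i : Fin (0 + 1 + ∑ j : Fin (0+1+1), gThree0 j), (i : ℕ) = 0 → (p i : ℕ) = 0)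
            ∧ p ≠ 1} := by
  have hsum : (∑ j, gThree0 j) = 3 := sum_gThree0
  have hsum' : (∑ j : Fin (0+1+1), gThree0 j) = 3 := hsum
  ext p
  rw [mem_ZSet_iff, Set.mem_setOf_eq]
  constructor
  · rintro ⟨⟨hav1, hav2⟩, hpin⟩
    constructor
    · intro i hi
      have hfl : (∑ j ∈ Finset.univ.filter
            fun j : Fin (0+1+1) => (j : ℕ) ≤ (((0 : Fin (0+1))) : ℕ), gThree0 j)
          = if 1 ≤ (((0 : Fin (0+1))) : ℕ) then 3 else 0 :=
        sum_gThree0_filter _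
      have hv0 : (((0 : Fin (0+1))) : ℕ) = 0 := rfl
      have hp := hpin 0 i (by rw [hfl, hv0]; simpa using hi)
      rw [hp, rev_val]
      omega
    · intro hp1
      apply hav1
      refine ⟨fun a => ⟨(a : ℕ), by have := a.isLt; omega⟩, ?_, ?_⟩
      · intro x y hxy
        rw [Fin.lt_def]
        simp only [val_mk']
        exact hxy
      · intro x y
        rw [hp1]
        simp only [Equiv.Perm.one_apply, Fin.lt_def, val_mk']
  · rintro ⟨hfix, hne1⟩
    refine ⟨⟨?_, ?_⟩, ?_⟩
    · rintro ⟨f, hf, hpat⟩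
      apply hne1
      have key : ∀ x y : Fin 4, x < y → (p (f x) : ℕ) < (p (f y) : ℕ) :=
        fun x y h => (hpat x y).1 h
      have h01 : (f 0 : ℕ) < (f 1 : ℕ) := hf (by decide)
      have h12 : (f 1 : ℕ) < (f 2 : ℕ) := hf (by decide)
      have h23 : (f 2 : ℕ) < (f 3 : ℕ) := hf (by decide)
      have k01 := key 0 1 (by decide)
      have k12 := key 1 2 (by decide)
      have k23 := key 2 3 (by decide)
      have i3 := (f 3).isLt
      have q3 := (p (f 3)).isLt
      apply Equiv.ext
      intro i
      have hi4 : (i : ℕ) < 4 := by have := i.isLt; omega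
      have hgoal : (p i : ℕ) = (i : ℕ) := by
        have hc : (i : ℕ) = 0 ∨ (i : ℕ) = 1 ∨ (i : ℕ) = 2 ∨ (i : ℕ) = 3 := by omega
        rcases hc with h | h | h | h
        · have hif : i = f 0 := Fin.ext (by omega)
          rw [hif]; omega
        · have hif : i = f 1 := Fin.ext (by omega)
          rw [hif]; omega
        · have hif : i = f 2 := Fin.ext (by omega)
          rw [hif]; omega
        · have hif : i = f 3 := Fin.ext (by omega)
          rw [hif]; omega
      refine Fin.ext ?_
      rw [Equiv.Perm.one_apply]
      exact hgoal
    · rintro ⟨f, hf, hpat⟩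
      simp only [p4231_coe] at hpat
      have h20 : (p (f 2) : ℕ) < (p (f 0) : ℕ) := (hpat 2 0).1 (by decide)
      have h01 : (f 0 : ℕ) < (f 1 : ℕ) := hf (by decide)
      have h12 : (f 1 : ℕ) < (f 2 : ℕ) := hf (by decide)
      have h23 : (f 2 : ℕ) < (f 3 : ℕ) := hf (by decide)
      by_cases h0 : (f 0 : ℕ) = 0
      · have := hfix (f 0) h0
        omega
      · have := (f 3).isLt
        omega
    · intro s i hi
      have hs0 : (s : ℕ) = 0 := by have := s.isLt; omega
      have hfl : (∑ j ∈ Finset.univ.filter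
            fun j : Fin (0+1+1) => (j : ℕ) ≤ ((s : Fin (0+1)) : ℕ), gThree0 j)
          = if 1 ≤ ((s : Fin (0+1)) : ℕ) then 3 else 0 :=
        sum_gThree0_filter _
      rw [hfl] at hi
      have hi0 : (i : ℕ) = 0 := by split_ifs at hi <;> omega
      rw [rev_val, hfix i hi0]
      omega

lemma count5 (n : ℕ) (hn : n = 4) :
    {p : Equiv.Perm (Fin n) | (∀ i : Fin n, (i : ℕ) = 0 → (p i : ℕ) = 0) ∧ p ≠ 1}.ncard = 5 := by
  subst hn
  have he : {p : Equiv.Perm (Fin 4) | (∀ i : Fin 4, (i : ℕ) = 0 → (p i : ℕ) = 0) ∧ p ≠ 1}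
      = ↑(Finset.univ.filter
          (fun p : Equiv.Perm (Fin 4) => (∀ i : Fin 4, (i : ℕ) = 0 → (p i : ℕ) = 0) ∧ p ≠ 1)) := by
    ext q
    simp
  rw [he, Set.ncard_coe_finset]
  decide

lemma count6 (n : ℕ) (hn : n = 3) :
    (Set.univ : Set (Equiv.Perm (Fin n))).ncard = 6 := by
  subst hn
  rw [Set.ncard_univ, Nat.card_eq_fintype_card]
  decide

lemma m0_del_univ (π0 : Equiv.Perm (Fin 0)) (g1 : Fin (0+1) → ℕ) (hg : (∑ j, g1 j) = 3) :
    ZSet ({⟨4, 1⟩, ⟨4, p4231⟩} : Set PermAny) π0 g1 = Set.univ := by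
  apply Set.eq_univ_iff_forall.mpr
  intro p
  rw [mem_ZSet_iff]
  exact ⟨⟨not_contains_of_lt _ _ (by omega), not_contains_of_lt _ _ (by omega)⟩,
    fun r => r.elim0⟩

/-- For every `k ≥ 1`, the decreasing permutation `k(k−1)⋯21` is
ES⁺-irreducible with respect to `B = {1234, 4231}` (here `k = m + 1`, the
decreasing permutation is `Fin.revPerm`, and `1234` is the identity). -/
theorem decreasing_esPlus_irreducible_1234_4231 (m : ℕ) (r : Fin (m + 1)) :
    ¬ ESPlusRed ({⟨4, 1⟩, ⟨4, p4231⟩} : Set PermAny)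
      (Fin.revPerm : Equiv.Perm (Fin (m + 1))) r := by
  intro hred
  rcases Nat.eq_zero_or_pos m with hm0 | hm1
  · -- m = 0
    subst hm0
    have hsum : (∑ j, gThree0 j) = 3 := sum_gThree0
    have hsum' : (∑ j : Fin (0+1+1), gThree0 j) = 3 := hsum
    have h1lt : (1 : ℕ) < 0 + 1 + ∑ j : Fin (0+1+1), gThree0 j := by omega
    have h2lt : (2 : ℕ) < 0 + 1 + ∑ j : Fin (0+1+1), gThree0 j := by omega
    have hne : (ZSet ({⟨4, 1⟩, ⟨4, p4231⟩} : Set PermAny)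
        (Fin.revPerm : Equiv.Perm (Fin (0+1))) gThree0).Nonempty := by
      rw [m0_orig_char]
      refine ⟨Equiv.swap ⟨1, h1lt⟩ ⟨2, h2lt⟩, ?_, ?_⟩
      · intro i hi
        have hne1 : i ≠ ⟨1, h1lt⟩ := by
          intro h; rw [h] at hi; simp [val_mk'] at hi
        have hne2 : i ≠ ⟨2, h2lt⟩ := by
          intro h; rw [h] at hi; simp [val_mk'] at hi
        rw [Equiv.swap_apply_of_ne_of_ne hne1 hne2]
        exact hi
      · intro h
        have h2 := congrArg (fun q : Equiv.Perm (Fin (0 + 1 + ∑ j : Fin (0+1+1), gThree0 j)) =>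
          (q ⟨1, h1lt⟩ : ℕ)) h
        simp [Equiv.swap_apply_left] at h2
    have heq := hred gThree0 hne
    have hg3 : (∑ j, delGap gThree0 r j) = 3 := by
      rw [delGap_gThree0 r]; decide
    rw [m0_orig_char, count5 _ (by omega)] at heq
    rw [m0_del_univ (delEntry Fin.revPerm r) (delGap gThree0 r) hg3,
      count6 _ (by omega)] at heq
    omega
  · by_cases hr : (r : ℕ) = m
    · -- last entry : use gaps (m-1, m)
      have hs1 : (∑ j, gOnes (m+2) (m-1) j) = 2 := sum_gOnes (m+2) (m-1) (by omega)
      have hs1' : (∑ j : Fin (m+1+1), gOnes (m+2) (m-1) j) = 2 := hs1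
      have hs2 : (∑ j, gOnes (m+1) (m-1) j) = 2 := sum_gOnes (m+1) (m-1) (by omega)
      have hne : (ZSet ({⟨4, 1⟩, ⟨4, p4231⟩} : Set PermAny)
          (Fin.revPerm : Equiv.Perm (Fin (m+1))) (gOnes (m+2) (m-1))).Nonempty := by
        rw [orig_char m (m-1) (by omega) (by omega)]
        exact Set.singleton_nonempty _
      have heq := hred (gOnes (m+2) (m-1)) hne
      rw [orig_char m (m-1) (by omega) (by omega), Set.ncard_singleton] at heq
      rw [delEntry_rev m r, delGap_gOnes_last m hm1 r hr] at heq
      rw [d2_char m hm1 (by omega) (by omega),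
        Set.ncard_pair (bigPerm_ne _ _ (by omega) (by omega))] at heq
      omega
    · -- middle entry : use gaps (r, r+1)
      have hle : (r : ℕ) + 1 ≤ m := by have := r.isLt; omega
      have hs1 : (∑ j, gOnes (m+2) (r : ℕ) j) = 2 := sum_gOnes (m+2) (r : ℕ) (by omega)
      have hs1' : (∑ j : Fin (m+1+1), gOnes (m+2) (r : ℕ) j) = 2 := hs1
      have hs2 : (∑ j, gTwo (m+1) (r : ℕ) j) = 2 := sum_gTwo (m+1) (r : ℕ) (by omega)
      have hne : (ZSet ({⟨4, 1⟩, ⟨4, p4231⟩} : Set PermAny)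
          (Fin.revPerm : Equiv.Perm (Fin (m+1))) (gOnes (m+2) (r : ℕ))).Nonempty := by
        rw [orig_char m (r : ℕ) hle (by omega)]
        exact Set.singleton_nonempty _
      have heq := hred (gOnes (m+2) (r : ℕ)) hne
      rw [orig_char m (r : ℕ) hle (by omega), Set.ncard_singleton] at heq
      rw [delEntry_rev m r, delGap_gOnes_mid m r hle] at heq
      rw [d1_char m (r : ℕ) hle (by omega) (by omega),
        Set.ncard_pair (bigPerm_ne _ _ (by omega) (by omega))] at heq
      omega
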